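/- arXiv:2412.14695 — 2 statements merged into one kernel-verified Lean document; each statement's English description precedes it below -/
import Mathlib

section
/- Let x, y ∈ L^{K,n} with K < 0 and w_x, w_y ≥ 0 not both zero. Then ⟨w_x·x + w_y·y, w_x·x + w_y·y⟩_L < 0, i.e., any non-trivial non-negative combination of two points on the hyperboloid is a time-like vector. -/
open Finset

/-- Lorentzian inner product on ℝ^{n+1}: ⟨u,v⟩_L = -u₀v₀ + Σᵢ uᵢvᵢ. -/
noncomputable def lip {n : ℕ} (u v : Fin (n+1) → ℝ) : ℝ :=
  -(u 0 * v 0) + ∑ i : Fin n, u i.succ * v i.succ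

/-- Lorentzian norm ‖v‖_L = √|⟨v,v⟩_L|. -/
noncomputable def lnorm {n : ℕ} (v : Fin (n+1) → ℝ) : ℝ := Real.sqrt |lip v v|

/-- Membership in the Lorentz hyperboloid L^{K,n}. -/
def onH {n : ℕ} (K : ℝ) (x : Fin (n+1) → ℝ) : Prop := lip x x = 1/K ∧ 0 < x 0

set_option maxHeartbeats 1000000 in
theorem lorentz_combination_timelike {n : ℕ} (K : ℝ) (hK : K < 0)
    (x y : Fin (n+1) → ℝ) (hx : onH K x) (hy : onH K y)
    (wx wy : ℝ) (hwx : 0 ≤ wx) (hwy : 0 ≤ wy) (hw : ¬(wx = 0 ∧ wy = 0)) :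
    lip (wx • x + wy • y) (wx • x + wy • y) < 0 := by
  obtain ⟨hxx, hx0⟩ := hx
  obtain ⟨hyy, hy0⟩ := hy
  unfold lip at hxx hyy ⊢
  set a := x 0 with ha
  set b := y 0 with hb
  set A := ∑ i : Fin n, x i.succ * x i.succ with hA
  set B := ∑ i : Fin n, y i.succ * y i.succ with hB
  set S := ∑ i : Fin n, x i.succ * y i.succ with hS
  have hAeq : A = a * a + 1/K := by linarith
  have hBeq : B = b * b + 1/K := by linarith
  have hApos : 0 ≤ A := Finset.sum_nonneg fun i _ => mul_self_nonneg _
  have hBpos : 0 ≤ B := Finset.sum_nonneg fun i _ => mul_self_nonneg _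
  have hCS : S ^ 2 ≤ A * B := by
    have h := Finset.sum_mul_sq_le_sq_mul_sq Finset.univ
      (fun i : Fin n => x i.succ) (fun i : Fin n => y i.succ)
    simpa [hA, hB, hS, sq] using h
  have hKinv : 1/K < 0 := div_neg_of_pos_of_neg one_pos hK
  -- expand the goal
  have hcomb0 : (wx • x + wy • y) 0 = wx * a + wy * b := by
    simp [ha, hb]
  have hcombsum : ∑ i : Fin n, (wx • x + wy • y) i.succ * (wx • x + wy • y) i.succ
      = wx * wx * A + 2 * (wx * wy) * S + wy * wy * B := by
    rw [hA, hB, hS, Finset.mul_sum, Finset.mul_sum, Finset.mul_sum, ← Finset.sum_add_distrib,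
      ← Finset.sum_add_distrib]
    refine Finset.sum_congr rfl fun i _ => ?_
    simp only [Pi.add_apply, Pi.smul_apply, smul_eq_mul]
    ring
  rw [hcomb0, hcombsum]
  -- key: S ≤ a*b + 1/K
  have hwpos : 0 < wx + wy := by
    rcases lt_or_eq_of_le hwx with h | h
    · linarith
    rcases lt_or_eq_of_le hwy with h' | h'
    · linarith
    · exact absurd ⟨h.symm, h'.symm⟩ hw
  have hKneg : 0 < -(1/K) := by linarith
  have ha2 : -(1/K) ≤ a * a := by nlinarith
  have hb2 : -(1/K) ≤ b * b := by nlinarith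
  have hab : 0 ≤ a * b + 1/K := by nlinarith
  have hABle : A * B ≤ (a * b + 1/K) ^ 2 := by
    have h1 : 0 ≤ (a - b) ^ 2 * (-(1/K)) := mul_nonneg (sq_nonneg _) hKneg.le
    nlinarith
  have hSle : S ≤ a * b + 1/K := by
    have h1 : S ≤ |S| := le_abs_self S
    have h2 : |S| = Real.sqrt (S ^ 2) := (Real.sqrt_sq_eq_abs S).symm
    have h3 : Real.sqrt (S ^ 2) ≤ Real.sqrt ((a * b + 1/K) ^ 2) :=
      Real.sqrt_le_sqrt (le_trans hCS hABle)
    have h4 : Real.sqrt ((a * b + 1/K) ^ 2) = a * b + 1/K := by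
      rw [Real.sqrt_sq hab]
    linarith
  have key : -((wx * a + wy * b) * (wx * a + wy * b)) +
      (wx * wx * A + 2 * (wx * wy) * S + wy * wy * B) ≤ (wx + wy) ^ 2 * (1/K) := by
    have h1 : 0 ≤ (wx * wy) * ((a * b + 1/K) - S) :=
      mul_nonneg (mul_nonneg hwx hwy) (by linarith)
    rw [hAeq, hBeq]
    linarith [h1]
  have hfin : (wx + wy) ^ 2 * (1/K) < 0 :=
    mul_neg_of_pos_of_neg (by positivity) (by linarith)
  linarith
end

section
/- Under the Lorentz-to-Klein isometry φ(x) = x_s/x_t, the image of the Lorentzian weighted centroid m = (w_x·x + w_y·y)/(√(-K)|‖w_x·x + w_y·y‖_L|) lies on the Euclidean line segment between φ(x) and φ(y), for any x, y ∈ L^{K,n} and w_x, w_y > 0. -/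
open Finset

lemma lip_nonpos {n : ℕ} {K : ℝ} (hK : K < 0) {x y : Fin (n+1) → ℝ}
    (hx : onH K x) (hy : onH K y) : lip x y ≤ 0 := by
  obtain ⟨hx1, hx0⟩ := hx
  obtain ⟨hy1, hy0⟩ := hy
  have hKneg : 1/K < 0 := by
    apply div_neg_of_pos_of_neg one_pos hK
  have hxs : ∑ i : Fin n, x i.succ * x i.succ = 1/K + x 0 * x 0 := by
    have := hx1; unfold lip at this; linarith
  have hys : ∑ i : Fin n, y i.succ * y i.succ = 1/K + y 0 * y 0 := by
    have := hy1; unfold lip at this; linarith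
  have hcs : (∑ i : Fin n, x i.succ * y i.succ) ^ 2 ≤
      (∑ i : Fin n, x i.succ * x i.succ) * (∑ i : Fin n, y i.succ * y i.succ) := by
    have := Finset.sum_mul_sq_le_sq_mul_sq Finset.univ
      (fun i : Fin n => x i.succ) (fun i : Fin n => y i.succ)
    simpa [pow_two] using this
  have h1 : (∑ i : Fin n, x i.succ * y i.succ) ^ 2 ≤ (x 0 * y 0) ^ 2 := by
    have h2 : (0:ℝ) ≤ 1/K + x 0 * x 0 := by
      rw [← hxs]; exact Finset.sum_nonneg fun i _ => mul_self_nonneg _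
    have h3 : (0:ℝ) ≤ 1/K + y 0 * y 0 := by
      rw [← hys]; exact Finset.sum_nonneg fun i _ => mul_self_nonneg _
    rw [hxs, hys] at hcs
    nlinarith
  have h4 : ∑ i : Fin n, x i.succ * y i.succ ≤ x 0 * y 0 := by
    nlinarith [mul_pos hx0 hy0]
  unfold lip; linarith

theorem klein_image_of_centroid_on_segment {n : ℕ} (K : ℝ) (hK : K < 0)
    (x y : Fin (n+1) → ℝ) (hx : onH K x) (hy : onH K y)
    (wx wy : ℝ) (hwx : 0 < wx) (hwy : 0 < wy) :
    (fun i : Fin n =>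
        ((Real.sqrt (-K) * lnorm (wx • x + wy • y))⁻¹ • (wx • x + wy • y)) i.succ /
        ((Real.sqrt (-K) * lnorm (wx • x + wy • y))⁻¹ • (wx • x + wy • y)) 0) ∈
      segment ℝ (fun i : Fin n => x i.succ / x 0) (fun i : Fin n => y i.succ / y 0) := by
  have hx0 := hx.2
  have hy0 := hy.2
  have hKneg : 1/K < 0 := div_neg_of_pos_of_neg one_pos hK
  set v := wx • x + wy • y with hv
  -- expand lip v v
  have hlipv : lip v v
      = wx * wx * lip x x + 2 * (wx * wy) * lip x y + wy * wy * lip y y := by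
    unfold lip
    have e : ∑ i : Fin n, v i.succ * v i.succ
        = wx * wx * ∑ i : Fin n, x i.succ * x i.succ
          + 2 * (wx * wy) * ∑ i : Fin n, x i.succ * y i.succ
          + wy * wy * ∑ i : Fin n, y i.succ * y i.succ := by
      rw [Finset.mul_sum, Finset.mul_sum, Finset.mul_sum, ← Finset.sum_add_distrib,
        ← Finset.sum_add_distrib]
      apply Finset.sum_congr rfl
      intro i _
      simp only [hv, Pi.add_apply, Pi.smul_apply, smul_eq_mul]
      ring
    rw [e]
    simp only [hv, Pi.add_apply, Pi.smul_apply, smul_eq_mul]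
    ring
  have hlipv_neg : lip v v < 0 := by
    rw [hlipv, hx.1, hy.1]
    nlinarith [lip_nonpos hK hx hy, mul_pos hwx hwy, mul_pos hwx hwx, mul_pos hwy hwy]
  have hc : Real.sqrt (-K) * lnorm v ≠ 0 := by
    apply ne_of_gt
    apply mul_pos (Real.sqrt_pos.mpr (by linarith))
    exact Real.sqrt_pos.mpr (abs_pos.mpr (ne_of_lt hlipv_neg))
  have hcinv : (Real.sqrt (-K) * lnorm v)⁻¹ ≠ 0 := inv_ne_zero hc
  have hS : 0 < wx * x 0 + wy * y 0 := by positivity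
  refine ⟨wx * x 0 / (wx * x 0 + wy * y 0), wy * y 0 / (wx * x 0 + wy * y 0),
    by positivity, by positivity, by field_simp, ?_⟩
  funext i
  simp only [Pi.add_apply, Pi.smul_apply, smul_eq_mul]
  rw [mul_div_mul_left _ _ hcinv]
  simp only [hv, Pi.add_apply, Pi.smul_apply, smul_eq_mul]
  field_simp
end
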